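/- Let G be a weighted graph with minimum cut value λ, and let v be a vertex of degree two with incident edges e₀ = (v,u₀) and e₁ = (v,u₁) with c(e₀) > c(e₁). If the weighted degree of v satisfies c(v) > λ, then no minimum cut of G contains e₀; if c(v) = λ, then the only minimum cut containing e₀ is the trivial cut ({v}, V∖{v}). -/
import Mathlib


open Finset

variable {V : Type*} [Fintype V] [DecidableEq V]

/-- Weight of the cut `(A, V ∖ A)`: total weight of edges from `A` to its complement. -/
def cutWeight (c : V → V → ℕ) (A : Finset V) : ℕ :=
  ∑ u ∈ A, ∑ v ∈ Aᶜ, c u v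

/-- `A` induces a cut: it is a nonempty proper subset of the vertices. -/
def IsCut (A : Finset V) : Prop := A.Nonempty ∧ A ≠ Finset.univ

/-- `A` is a (global) minimum cut of the graph with weights `c`. -/
def IsMinCut (c : V → V → ℕ) (A : Finset V) : Prop :=
  IsCut A ∧ ∀ B : Finset V, IsCut B → cutWeight c A ≤ cutWeight c B

/-- The global minimum cut value λ(G). -/
noncomputable def minCutVal (c : V → V → ℕ) : ℕ :=
  sInf (cutWeight c '' {A : Finset V | IsCut A})

/-- Cuts of the contracted graph `G/(u,v)` correspond exactly to the cuts of `G`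
that do not separate `u` and `v`; the weights agree. -/
def IsCutNS (u v : V) (A : Finset V) : Prop := IsCut A ∧ (u ∈ A ↔ v ∈ A)

/-- The minimum cut value λ(G/(u,v)) of the graph obtained by contracting the edge `(u,v)`. -/
noncomputable def minCutValC (c : V → V → ℕ) (u v : V) : ℕ :=
  sInf (cutWeight c '' {A : Finset V | IsCutNS u v A})

lemma cutWeight_compl (c : V → V → ℕ) (hsym : ∀ a b, c a b = c b a) (A : Finset V) :
    cutWeight c Aᶜ = cutWeight c A := by
  unfold cutWeight
  rw [compl_compl, Finset.sum_comm]
  exact Finset.sum_congr rfl fun u _ => Finset.sum_congr rfl fun w _ => hsym w u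

lemma isCut_compl {A : Finset V} (h : IsCut A) : IsCut Aᶜ := by
  constructor
  · rcases Finset.eq_empty_or_nonempty Aᶜ with he | hne
    · exact absurd (by simpa using congrArg compl he) h.2
    · exact hne
  · intro hc
    have : A = ∅ := by simpa using congrArg compl hc
    exact h.1.ne_empty this

lemma isMinCut_compl (c : V → V → ℕ) (hsym : ∀ a b, c a b = c b a) {A : Finset V}
    (h : IsMinCut c A) : IsMinCut c Aᶜ :=
  ⟨isCut_compl h.1, fun B hB => (cutWeight_compl c hsym A) ▸ h.2 B hB⟩

lemma minCut_val_eq (c : V → V → ℕ) {A : Finset V} (h : IsMinCut c A) :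
    cutWeight c A = minCutVal c := by
  have hne : (cutWeight c '' {A : Finset V | IsCut A}).Nonempty := ⟨_, A, h.1, rfl⟩
  obtain ⟨B, hB, hBe⟩ := Nat.sInf_mem hne
  apply le_antisymm
  · rw [minCutVal, ← hBe]; exact h.2 B hB
  · exact Nat.sInf_le ⟨A, h.1, rfl⟩

lemma erase_identity (c : V → V → ℕ) (A : Finset V) (v : V) (hv : v ∈ A) :
    cutWeight c (A.erase v) + ∑ w ∈ Aᶜ, c v w
      = cutWeight c A + ∑ u ∈ A.erase v, c u v := by
  unfold cutWeight
  have hvA : v ∉ Aᶜ := by simp [hv]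
  rw [Finset.compl_erase,
    Finset.sum_congr rfl (fun u _ => Finset.sum_insert hvA),
    Finset.sum_add_distrib, ← Finset.add_sum_erase A _ hv]
  omega

lemma sum_compl_two (c : V → V → ℕ) (v u0 u1 : V) (h01 : u0 ≠ u1)
    (hnbr : ∀ u : V, u ≠ u0 → u ≠ u1 → c v u = 0)
    (S : Finset V) (h0 : u0 ∈ S) (h1 : u1 ∈ S) :
    ∑ w ∈ S, c v w = c v u0 + c v u1 := by
  rw [← Finset.sum_subset (s₁ := {u0, u1}) (by
      intro x hx
      simp only [Finset.mem_insert, Finset.mem_singleton] at hx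
      rcases hx with rfl | rfl <;> assumption)
    (by
      intro x _ hx
      simp only [Finset.mem_insert, Finset.mem_singleton, not_or] at hx
      exact hnbr x hx.1 hx.2)]
  rw [Finset.sum_pair h01]

lemma cutWeight_singleton (c : V → V → ℕ) (v u0 u1 : V) (h01 : u0 ≠ u1)
    (hv0 : v ≠ u0) (hv1 : v ≠ u1)
    (hnbr : ∀ u : V, u ≠ u0 → u ≠ u1 → c v u = 0) :
    cutWeight c {v} = c v u0 + c v u1 := by
  unfold cutWeight
  rw [Finset.sum_singleton]
  exact sum_compl_two c v u0 u1 h01 hnbr _ (by simp [Ne.symm hv0]) (by simp [Ne.symm hv1])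

lemma key (c : V → V → ℕ) (hsym : ∀ a b : V, c a b = c b a)
    (v u0 u1 : V) (h01 : u0 ≠ u1) (hv0 : v ≠ u0) (hv1 : v ≠ u1)
    (hnbr : ∀ u : V, u ≠ u0 → u ≠ u1 → c v u = 0)
    (he1 : 0 < c v u1) (hgt : c v u1 < c v u0)
    (A : Finset V) (hmin : IsMinCut c A) (hvA : v ∈ A) (hu0 : u0 ∉ A) :
    cutWeight c {v} ≤ cutWeight c A ∧
      (cutWeight c {v} = minCutVal c → A = {v}) := by
  have hid := erase_identity c A v hvA
  have hsing := cutWeight_singleton c v u0 u1 h01 hv0 hv1 hnbr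
  by_cases hu1 : u1 ∈ A
  · -- u1 on the same side as v: moving v strictly improves the cut, contradiction
    exfalso
    have hBcut : IsCut (A.erase v) := by
      refine ⟨⟨u1, Finset.mem_erase.mpr ⟨Ne.symm hv1, hu1⟩⟩, ?_⟩
      intro h
      have : v ∈ A.erase v := h ▸ Finset.mem_univ v
      simp at this
    have h1 : ∑ w ∈ Aᶜ, c v w = c v u0 := by
      rw [← Finset.sum_subset (s₁ := {u0})
        (by simpa using hu0)
        (by
          intro x hx hx0
          simp only [Finset.mem_singleton] at hx0
          refine hnbr x hx0 ?_
          rintro rfl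
          exact (Finset.mem_compl.mp hx) hu1)]
      simp
    have h2 : ∑ u ∈ A.erase v, c u v = c u1 v := by
      rw [← Finset.sum_subset (s₁ := {u1})
        (by simp [Finset.mem_erase, Ne.symm hv1, hu1])
        (by
          intro x hx hx1
          simp only [Finset.mem_singleton] at hx1
          rw [hsym]
          refine hnbr x ?_ hx1
          rintro rfl
          exact hu0 (Finset.mem_of_mem_erase hx))]
      simp
    have hle := hmin.2 _ hBcut
    rw [h1, h2, hsym u1 v] at hid
    omega
  · -- v is separated from both neighbors
    have h1 : ∑ w ∈ Aᶜ, c v w = c v u0 + c v u1 :=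
      sum_compl_two c v u0 u1 h01 hnbr _ (Finset.mem_compl.mpr hu0) (Finset.mem_compl.mpr hu1)
    have hge : cutWeight c {v} ≤ cutWeight c A := by
      rw [hsing, ← h1]
      exact Finset.single_le_sum (f := fun u => ∑ w ∈ Aᶜ, c u w) (fun i _ => Nat.zero_le _) hvA
    refine ⟨hge, fun heq => ?_⟩
    rcases Finset.eq_empty_or_nonempty (A.erase v) with he | hne
    · apply Finset.eq_singleton_iff_unique_mem.mpr
      refine ⟨hvA, fun x hx => ?_⟩
      by_contra hxv
      have : x ∈ A.erase v := Finset.mem_erase.mpr ⟨hxv, hx⟩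
      simp [he] at this
    · exfalso
      have hBcut : IsCut (A.erase v) := by
        refine ⟨hne, ?_⟩
        intro h
        have : v ∈ A.erase v := h ▸ Finset.mem_univ v
        simp at this
      have h2 : ∑ u ∈ A.erase v, c u v = 0 := by
        apply Finset.sum_eq_zero
        intro x hx
        rw [hsym]
        refine hnbr x ?_ ?_
        · rintro rfl; exact hu0 (Finset.mem_of_mem_erase hx)
        · rintro rfl; exact hu1 (Finset.mem_of_mem_erase hx)
      have hAval : cutWeight c A = minCutVal c := minCut_val_eq c hmin
      have hle := hmin.2 _ hBcut
      rw [h1, h2] at hid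
      rw [hsing] at heq
      omega

/-- For a degree-two vertex `v` with neighbors `u₀, u₁` and `c(v,u₀) > c(v,u₁)`:
if the weighted degree of `v` exceeds λ(G), no minimum cut contains the heavier edge
`e₀ = (v,u₀)`; if the weighted degree equals λ(G), the only minimum cut containing
`e₀` is the trivial cut `({v}, V ∖ {v})`. -/
theorem stmt7 (c : V → V → ℕ) (hsym : ∀ a b : V, c a b = c b a)
    (v u0 u1 : V) (h01 : u0 ≠ u1) (hv0 : v ≠ u0) (hv1 : v ≠ u1)
    (hnbr : ∀ u : V, u ≠ u0 → u ≠ u1 → c v u = 0)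
    (he1 : 0 < c v u1) (hgt : c v u1 < c v u0) :
    (minCutVal c < cutWeight c {v} →
      ∀ A : Finset V, IsMinCut c A → (v ∈ A ↔ u0 ∈ A)) ∧
    (cutWeight c {v} = minCutVal c →
      ∀ A : Finset V, IsMinCut c A → ¬(v ∈ A ↔ u0 ∈ A) → A = {v} ∨ A = {v}ᶜ) := by
  have key' := key c hsym v u0 u1 h01 hv0 hv1 hnbr he1 hgt
  constructor
  · intro hlt A hmin
    by_contra hiff
    by_cases hv : v ∈ A
    · have hu0A : u0 ∉ A := fun h => hiff ⟨fun _ => h, fun _ => hv⟩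
      have h1 := (key' A hmin hv hu0A).1
      have hAval := minCut_val_eq c hmin
      omega
    · have hu0A : u0 ∈ A := by
        by_contra h
        exact hiff ⟨fun hh => absurd hh hv, fun hh => absurd hh h⟩
      have hmin' := isMinCut_compl c hsym hmin
      have h1 := (key' Aᶜ hmin' (Finset.mem_compl.mpr hv) (by simp [hu0A])).1
      have hAval := minCut_val_eq c hmin'
      omega
  · intro heq A hmin hiff
    by_cases hv : v ∈ A
    · have hu0A : u0 ∉ A := fun h => hiff ⟨fun _ => h, fun _ => hv⟩
      exact Or.inl ((key' A hmin hv hu0A).2 heq)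
    · have hu0A : u0 ∈ A := by
        by_contra h
        exact hiff ⟨fun hh => absurd hh hv, fun hh => absurd hh h⟩
      have hc : Aᶜ = {v} :=
        (key' Aᶜ (isMinCut_compl c hsym hmin) (Finset.mem_compl.mpr hv)
          (by simp [hu0A])).2 heq
      right
      rw [← hc, compl_compl]
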